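/- (Theorem 3.3, part 1: difference formula for G.) Let a < b be real numbers and let f₁, f₂, g : ℝ → ℝ be continuous on [a,b]. Define G(f) = ∫_a^b (f(x) − g(x))² dx + ∫_a^b (D_f(x) − D_g(x))² dx. Then G(f₁) − G(f₂) = −2 ∫_a^b (f₁(x) − f₂(x)) · [ ( g(x) − (f₁(x)+f₂(x))/2 ) + ( u_g(x) − (u_{f₁}(x)+u_{f₂}(x))/2 ) ] dx. -/

import Mathlib

open intervalIntegral Filter

/-- `uFun a b f` is `-Δ⁻¹ f`: the solution of `-y'' = f`, `y a = 0`, `y b = 0`,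
given by the explicit double-integral formula of the paper. -/
noncomputable def uFun (a b : ℝ) (f : ℝ → ℝ) (x : ℝ) : ℝ :=
  (∫ η in x..b, ∫ ξ in a..η, f ξ) -
    ((b - x) / (b - a)) * ∫ η in a..b, ∫ ξ in a..η, f ξ

/-- `DFun a b f = (uFun a b f)'`, the derivative of `-Δ⁻¹ f`. -/
noncomputable def DFun (a b : ℝ) (f : ℝ → ℝ) (x : ℝ) : ℝ :=
  -(∫ ξ in a..x, f ξ) + (1 / (b - a)) * ∫ η in a..b, ∫ ξ in a..η, f ξ

section Aux

variable {a b : ℝ} {f p₁ p₂ p₃ h k : ℝ → ℝ}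

lemma prim_hasDerivAt (hf : Continuous f) (x : ℝ) :
    HasDerivAt (fun u => ∫ t in a..u, f t) (f x) x :=
  intervalIntegral.integral_hasDerivAt_right (hf.intervalIntegrable a x)
    (hf.stronglyMeasurable.stronglyMeasurableAtFilter) hf.continuousAt

lemma prim_cont (hf : Continuous f) : Continuous (fun u => ∫ t in a..u, f t) :=
  continuous_iff_continuousAt.2 fun x => (prim_hasDerivAt hf x).continuousAt

lemma uFun_hasDerivAt (hf : Continuous f) (x : ℝ) :
    HasDerivAt (uFun a b f) (DFun a b f x) x := by
  set F : ℝ → ℝ := fun η => ∫ ξ in a..η, f ξ with hFdef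
  have hF : Continuous F := prim_cont hf
  set C : ℝ := ∫ η in a..b, F η with hC
  have h1 : HasDerivAt (fun u => ∫ η in u..b, F η) (-F x) x :=
    intervalIntegral.integral_hasDerivAt_left (hF.intervalIntegrable x b)
      (hF.stronglyMeasurable.stronglyMeasurableAtFilter) hF.continuousAt
  have h2 : HasDerivAt (fun u => ((b - u) / (b - a)) * C) ((-1) / (b - a) * C) x :=
    (((hasDerivAt_id x).const_sub b).div_const (b - a)).mul_const C
  have : HasDerivAt (fun u => (∫ η in u..b, F η) - ((b - u) / (b - a)) * C)
      (-F x - (-1) / (b - a) * C) x := h1.sub h2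
  have heq : uFun a b f = fun u => (∫ η in u..b, F η) - ((b - u) / (b - a)) * C := by
    funext u; simp [uFun, hFdef, hC]
  rw [heq]
  convert this using 1
  simp only [DFun, hFdef, hC]
  ring

lemma DFun_hasDerivAt (hf : Continuous f) (x : ℝ) :
    HasDerivAt (DFun a b f) (-(f x)) x := by
  exact ((prim_hasDerivAt (a := a) hf x).neg).add_const
    ((1 / (b - a)) * ∫ η in a..b, ∫ ξ in a..η, f ξ)

lemma uFun_cont (hf : Continuous f) : Continuous (uFun a b f) :=
  continuous_iff_continuousAt.2 fun x => (uFun_hasDerivAt hf x).continuousAt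

lemma DFun_cont (hf : Continuous f) : Continuous (DFun a b f) :=
  continuous_iff_continuousAt.2 fun x => (DFun_hasDerivAt hf x).continuousAt

lemma uFun_left (hab : a < b) : uFun a b f a = 0 := by
  have : (b - a) / (b - a) = 1 := div_self (sub_ne_zero.2 hab.ne')
  simp [uFun, this]

lemma uFun_right : uFun a b f b = 0 := by
  simp [uFun]

lemma inner_comb3 (hp₁ : Continuous p₁) (hp₂ : Continuous p₂) (hp₃ : Continuous p₃)
    (c₁ c₂ c₃ : ℝ) (lo hi : ℝ) :
    (∫ ξ in lo..hi, (c₁ * p₁ ξ + c₂ * p₂ ξ + c₃ * p₃ ξ)) =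
      c₁ * (∫ ξ in lo..hi, p₁ ξ) + c₂ * (∫ ξ in lo..hi, p₂ ξ)
        + c₃ * (∫ ξ in lo..hi, p₃ ξ) := by
  rw [intervalIntegral.integral_add (f := fun ξ => c₁ * p₁ ξ + c₂ * p₂ ξ) (g := fun ξ => c₃ * p₃ ξ) ((((continuous_const.mul hp₁)).add ((continuous_const.mul hp₂))).intervalIntegrable lo hi)
      (((continuous_const.mul hp₃)).intervalIntegrable lo hi),
    intervalIntegral.integral_add (f := fun ξ => c₁ * p₁ ξ) (g := fun ξ => c₂ * p₂ ξ) (((continuous_const.mul hp₁)).intervalIntegrable lo hi)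
      (((continuous_const.mul hp₂)).intervalIntegrable lo hi),
    intervalIntegral.integral_const_mul, intervalIntegral.integral_const_mul,
    intervalIntegral.integral_const_mul]

lemma DFun_comb3 (hp₁ : Continuous p₁) (hp₂ : Continuous p₂) (hp₃ : Continuous p₃)
    (c₁ c₂ c₃ : ℝ) (F : ℝ → ℝ) (hF : ∀ x, F x = c₁ * p₁ x + c₂ * p₂ x + c₃ * p₃ x) (x : ℝ) :
    DFun a b F x = c₁ * DFun a b p₁ x + c₂ * DFun a b p₂ x + c₃ * DFun a b p₃ x := by
  have hFe : F = fun x => c₁ * p₁ x + c₂ * p₂ x + c₃ * p₃ x := funext hF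
  subst hFe
  have houter : (∫ η in a..b, ∫ ξ in a..η, (c₁ * p₁ ξ + c₂ * p₂ ξ + c₃ * p₃ ξ)) =
      c₁ * (∫ η in a..b, ∫ ξ in a..η, p₁ ξ) + c₂ * (∫ η in a..b, ∫ ξ in a..η, p₂ ξ)
        + c₃ * (∫ η in a..b, ∫ ξ in a..η, p₃ ξ) := by
    rw [intervalIntegral.integral_congr (g := fun η =>
        c₁ * (∫ ξ in a..η, p₁ ξ) + c₂ * (∫ ξ in a..η, p₂ ξ) + c₃ * (∫ ξ in a..η, p₃ ξ))
        (fun η _ => inner_comb3 hp₁ hp₂ hp₃ c₁ c₂ c₃ a η)]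
    exact inner_comb3 (prim_cont hp₁) (prim_cont hp₂) (prim_cont hp₃) c₁ c₂ c₃ a b
  simp only [DFun, inner_comb3 hp₁ hp₂ hp₃ c₁ c₂ c₃ a x, houter]
  ring

lemma uFun_comb3 (hp₁ : Continuous p₁) (hp₂ : Continuous p₂) (hp₃ : Continuous p₃)
    (c₁ c₂ c₃ : ℝ) (F : ℝ → ℝ) (hF : ∀ x, F x = c₁ * p₁ x + c₂ * p₂ x + c₃ * p₃ x) (x : ℝ) :
    uFun a b F x = c₁ * uFun a b p₁ x + c₂ * uFun a b p₂ x + c₃ * uFun a b p₃ x := by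
  have hFe : F = fun x => c₁ * p₁ x + c₂ * p₂ x + c₃ * p₃ x := funext hF
  subst hFe
  have houter : ∀ lo hi : ℝ, (∫ η in lo..hi, ∫ ξ in a..η, (c₁ * p₁ ξ + c₂ * p₂ ξ + c₃ * p₃ ξ)) =
      c₁ * (∫ η in lo..hi, ∫ ξ in a..η, p₁ ξ) + c₂ * (∫ η in lo..hi, ∫ ξ in a..η, p₂ ξ)
        + c₃ * (∫ η in lo..hi, ∫ ξ in a..η, p₃ ξ) := by
    intro lo hi
    rw [intervalIntegral.integral_congr (g := fun η =>
        c₁ * (∫ ξ in a..η, p₁ ξ) + c₂ * (∫ ξ in a..η, p₂ ξ) + c₃ * (∫ ξ in a..η, p₃ ξ))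
        (fun η _ => inner_comb3 hp₁ hp₂ hp₃ c₁ c₂ c₃ a η)]
    exact inner_comb3 (prim_cont hp₁) (prim_cont hp₂) (prim_cont hp₃) c₁ c₂ c₃ lo hi
  simp only [uFun, houter]
  ring

lemma ibp (hab : a < b) (hh : Continuous h) (hk : Continuous k) :
    (∫ x in a..b, DFun a b h x * DFun a b k x) = ∫ x in a..b, h x * uFun a b k x := by
  have key : ∀ x ∈ Set.uIcc a b, HasDerivAt (fun t => uFun a b k t * DFun a b h t)
      (DFun a b k x * DFun a b h x + uFun a b k x * (-(h x))) x :=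
    fun x _ => (uFun_hasDerivAt hk x).mul (DFun_hasDerivAt hh x)
  have hint1 : IntervalIntegrable (fun x => DFun a b k x * DFun a b h x) MeasureTheory.volume a b :=
    ((DFun_cont hk).mul (DFun_cont hh)).intervalIntegrable a b
  have hint2 : IntervalIntegrable (fun x => uFun a b k x * (-(h x))) MeasureTheory.volume a b :=
    ((uFun_cont hk).mul hh.neg).intervalIntegrable a b
  have := intervalIntegral.integral_eq_sub_of_hasDerivAt key (hint1.add hint2)
  rw [intervalIntegral.integral_add hint1 hint2, uFun_right, uFun_left hab] at this
  simp only [zero_mul, sub_zero] at this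
  have h2 : (∫ x in a..b, uFun a b k x * (-(h x))) = -∫ x in a..b, h x * uFun a b k x := by
    rw [← intervalIntegral.integral_neg]
    exact intervalIntegral.integral_congr fun x _ => by ring
  rw [h2] at this
  have h3 : (∫ x in a..b, DFun a b k x * DFun a b h x)
      = ∫ x in a..b, DFun a b h x * DFun a b k x :=
    intervalIntegral.integral_congr fun x _ => mul_comm _ _
  linarith [this, h3]

lemma main_cont {f₁ f₂ g : ℝ → ℝ} (hab : a < b) (hf₁ : Continuous f₁)
    (hf₂ : Continuous f₂) (hg : Continuous g) :
    ((∫ x in a..b, (f₁ x - g x) ^ 2) + ∫ x in a..b, (DFun a b f₁ x - DFun a b g x) ^ 2)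
      - ((∫ x in a..b, (f₂ x - g x) ^ 2) + ∫ x in a..b, (DFun a b f₂ x - DFun a b g x) ^ 2)
    = -2 * ∫ x in a..b, (f₁ x - f₂ x) *
        ((g x - (f₁ x + f₂ x) / 2) +
          (uFun a b g x - (uFun a b f₁ x + uFun a b f₂ x) / 2)) := by
  set h : ℝ → ℝ := fun x => f₁ x - f₂ x with hh
  set k : ℝ → ℝ := fun x => f₁ x + f₂ x - 2 * g x with hk
  have hhc : Continuous h := hf₁.sub hf₂
  have hkc : Continuous k := (hf₁.add hf₂).sub (continuous_const.mul hg)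
  have hDh : ∀ x, DFun a b h x = 1 * DFun a b f₁ x + (-1) * DFun a b f₂ x + 0 * DFun a b g x :=
    DFun_comb3 hf₁ hf₂ hg 1 (-1) 0 h (fun x => by simp [hh]; ring)
  have hDk : ∀ x, DFun a b k x = 1 * DFun a b f₁ x + 1 * DFun a b f₂ x + (-2) * DFun a b g x :=
    DFun_comb3 hf₁ hf₂ hg 1 1 (-2) k (fun x => by simp [hk]; ring)
  have huk : ∀ x, uFun a b k x = 1 * uFun a b f₁ x + 1 * uFun a b f₂ x + (-2) * uFun a b g x :=
    uFun_comb3 hf₁ hf₂ hg 1 1 (-2) k (fun x => by simp [hk]; ring)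
  have step1 : (∫ x in a..b, (f₁ x - g x) ^ 2) - (∫ x in a..b, (f₂ x - g x) ^ 2)
      = ∫ x in a..b, h x * k x := by
    rw [← intervalIntegral.integral_sub (f := fun x => (f₁ x - g x) ^ 2) (g := fun x => (f₂ x - g x) ^ 2) (((hf₁.sub hg).pow 2).intervalIntegrable a b)
      (((hf₂.sub hg).pow 2).intervalIntegrable a b)]
    exact intervalIntegral.integral_congr fun x _ => by simp only [hh, hk]; ring
  have step2 : (∫ x in a..b, (DFun a b f₁ x - DFun a b g x) ^ 2)
      - (∫ x in a..b, (DFun a b f₂ x - DFun a b g x) ^ 2)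
      = ∫ x in a..b, DFun a b h x * DFun a b k x := by
    rw [← intervalIntegral.integral_sub (f := fun x => (DFun a b f₁ x - DFun a b g x) ^ 2) (g := fun x => (DFun a b f₂ x - DFun a b g x) ^ 2)
      ((((DFun_cont hf₁).sub (DFun_cont hg)).pow 2).intervalIntegrable a b)
      ((((DFun_cont hf₂).sub (DFun_cont hg)).pow 2).intervalIntegrable a b)]
    exact intervalIntegral.integral_congr fun x _ => by rw [hDh x, hDk x]; ring
  have step3 := ibp hab hhc hkc
  have step4 : (∫ x in a..b, h x * k x) + (∫ x in a..b, h x * uFun a b k x)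
      = -2 * ∫ x in a..b, (f₁ x - f₂ x) *
        ((g x - (f₁ x + f₂ x) / 2) +
          (uFun a b g x - (uFun a b f₁ x + uFun a b f₂ x) / 2)) := by
    rw [← intervalIntegral.integral_add (f := fun x => h x * k x) (g := fun x => h x * uFun a b k x) ((hhc.mul hkc).intervalIntegrable a b)
      ((hhc.mul (uFun_cont hkc)).intervalIntegrable a b),
      show (-2 : ℝ) * (∫ x in a..b, (f₁ x - f₂ x) *
        ((g x - (f₁ x + f₂ x) / 2) +
          (uFun a b g x - (uFun a b f₁ x + uFun a b f₂ x) / 2)))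
        = ∫ x in a..b, (-2) * ((f₁ x - f₂ x) *
        ((g x - (f₁ x + f₂ x) / 2) +
          (uFun a b g x - (uFun a b f₁ x + uFun a b f₂ x) / 2)))
        from (intervalIntegral.integral_const_mul _ _).symm]
    refine intervalIntegral.integral_congr fun x _ => ?_
    rw [huk x]
    simp only [hh, hk]
    ring
  calc ((∫ x in a..b, (f₁ x - g x) ^ 2) + ∫ x in a..b, (DFun a b f₁ x - DFun a b g x) ^ 2)
      - ((∫ x in a..b, (f₂ x - g x) ^ 2) + ∫ x in a..b, (DFun a b f₂ x - DFun a b g x) ^ 2)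
      = ((∫ x in a..b, (f₁ x - g x) ^ 2) - (∫ x in a..b, (f₂ x - g x) ^ 2))
        + ((∫ x in a..b, (DFun a b f₁ x - DFun a b g x) ^ 2)
          - (∫ x in a..b, (DFun a b f₂ x - DFun a b g x) ^ 2)) := by ring
    _ = (∫ x in a..b, h x * k x) + (∫ x in a..b, h x * uFun a b k x) := by
        rw [step1, step2, step3]
    _ = _ := step4

lemma inner_congr {a b : ℝ} {f F : ℝ → ℝ} (hE : Set.EqOn f F (Set.Icc a b))
    {η : ℝ} (hη : η ∈ Set.Icc a b) : (∫ ξ in a..η, f ξ) = ∫ ξ in a..η, F ξ :=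
  intervalIntegral.integral_congr (hE.mono (by
    rw [Set.uIcc_of_le hη.1]; exact Set.Icc_subset_Icc le_rfl hη.2))

lemma DFun_congr {a b : ℝ} (hab : a ≤ b) {f F : ℝ → ℝ} (hE : Set.EqOn f F (Set.Icc a b))
    {x : ℝ} (hx : x ∈ Set.Icc a b) : DFun a b f x = DFun a b F x := by
  unfold DFun
  rw [inner_congr hE hx, intervalIntegral.integral_congr (fun η hη => inner_congr hE
    (by rwa [Set.uIcc_of_le hab] at hη))]

lemma uFun_congr {a b : ℝ} (hab : a ≤ b) {f F : ℝ → ℝ} (hE : Set.EqOn f F (Set.Icc a b))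
    {x : ℝ} (hx : x ∈ Set.Icc a b) : uFun a b f x = uFun a b F x := by
  unfold uFun
  rw [intervalIntegral.integral_congr (a := x) (b := b) (fun η hη => inner_congr hE (by
      rw [Set.uIcc_of_le hx.2] at hη
      exact Set.Icc_subset_Icc hx.1 le_rfl hη)),
    intervalIntegral.integral_congr (a := a) (b := b) (fun η hη => inner_congr hE
      (by rwa [Set.uIcc_of_le hab] at hη))]

end Aux

theorem stmt_12 (a b : ℝ) (hab : a < b) (f₁ f₂ g : ℝ → ℝ)
    (hf₁ : ContinuousOn f₁ (Set.Icc a b)) (hf₂ : ContinuousOn f₂ (Set.Icc a b))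
    (hg : ContinuousOn g (Set.Icc a b))
    (G : (ℝ → ℝ) → ℝ)
    (hG : ∀ f : ℝ → ℝ, G f = (∫ x in a..b, (f x - g x) ^ 2) +
      ∫ x in a..b, (DFun a b f x - DFun a b g x) ^ 2) :
    G f₁ - G f₂ =
      -2 * ∫ x in a..b, (f₁ x - f₂ x) *
        ((g x - (f₁ x + f₂ x) / 2) +
          (uFun a b g x - (uFun a b f₁ x + uFun a b f₂ x) / 2)) := by
  set F₁ : ℝ → ℝ := Set.IccExtend hab.le (Set.restrict (Set.Icc a b) f₁) with hF₁def
  set F₂ : ℝ → ℝ := Set.IccExtend hab.le (Set.restrict (Set.Icc a b) f₂) with hF₂def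
  set Gc : ℝ → ℝ := Set.IccExtend hab.le (Set.restrict (Set.Icc a b) g) with hGcdef
  have hF₁c : Continuous F₁ := (continuousOn_iff_continuous_restrict.mp hf₁).Icc_extend'
  have hF₂c : Continuous F₂ := (continuousOn_iff_continuous_restrict.mp hf₂).Icc_extend'
  have hGcc : Continuous Gc := (continuousOn_iff_continuous_restrict.mp hg).Icc_extend'
  have e₁ : Set.EqOn f₁ F₁ (Set.Icc a b) := fun x hx => by
    rw [hF₁def, Set.IccExtend_of_mem _ _ hx]; rfl
  have e₂ : Set.EqOn f₂ F₂ (Set.Icc a b) := fun x hx => by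
    rw [hF₂def, Set.IccExtend_of_mem _ _ hx]; rfl
  have eg : Set.EqOn g Gc (Set.Icc a b) := fun x hx => by
    rw [hGcdef, Set.IccExtend_of_mem _ _ hx]; rfl
  rw [hG f₁, hG f₂]
  have key := main_cont (g := Gc) hab hF₁c hF₂c hGcc
  have r1 : (∫ x in a..b, (f₁ x - g x) ^ 2) = ∫ x in a..b, (F₁ x - Gc x) ^ 2 :=
    intervalIntegral.integral_congr fun x hx => by
      rw [Set.uIcc_of_le hab.le] at hx; rw [e₁ hx, eg hx]
  have r2 : (∫ x in a..b, (f₂ x - g x) ^ 2) = ∫ x in a..b, (F₂ x - Gc x) ^ 2 :=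
    intervalIntegral.integral_congr fun x hx => by
      rw [Set.uIcc_of_le hab.le] at hx; rw [e₂ hx, eg hx]
  have r3 : (∫ x in a..b, (DFun a b f₁ x - DFun a b g x) ^ 2)
      = ∫ x in a..b, (DFun a b F₁ x - DFun a b Gc x) ^ 2 :=
    intervalIntegral.integral_congr fun x hx => by
      rw [Set.uIcc_of_le hab.le] at hx
      rw [DFun_congr hab.le e₁ hx, DFun_congr hab.le eg hx]
  have r4 : (∫ x in a..b, (DFun a b f₂ x - DFun a b g x) ^ 2)
      = ∫ x in a..b, (DFun a b F₂ x - DFun a b Gc x) ^ 2 :=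
    intervalIntegral.integral_congr fun x hx => by
      rw [Set.uIcc_of_le hab.le] at hx
      rw [DFun_congr hab.le e₂ hx, DFun_congr hab.le eg hx]
  have r5 : (∫ x in a..b, (f₁ x - f₂ x) *
        ((g x - (f₁ x + f₂ x) / 2) +
          (uFun a b g x - (uFun a b f₁ x + uFun a b f₂ x) / 2)))
      = ∫ x in a..b, (F₁ x - F₂ x) *
        ((Gc x - (F₁ x + F₂ x) / 2) +
          (uFun a b Gc x - (uFun a b F₁ x + uFun a b F₂ x) / 2)) :=
    intervalIntegral.integral_congr fun x hx => by
      rw [Set.uIcc_of_le hab.le] at hx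
      rw [e₁ hx, e₂ hx, eg hx, uFun_congr hab.le e₁ hx, uFun_congr hab.le e₂ hx,
        uFun_congr hab.le eg hx]
  rw [r1, r2, r3, r4, r5]
  exact key
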